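/- arXiv:2209.14081 — 4 statements merged into one kernel-verified Lean document; each statement's English description precedes it below -/
import Mathlib

section
/- For every positive integer n̂, the forward difference of T_c satisfies ΔT_c(n̂) = α(n̂) + 1 − Σ_{i=1}^{n̂} p_T(i) − c·(1 − Σ_{i=1}^{⌊c·n̂⌋} p_T(i)), where α(n̂) = (c(n̂+1) − ⌊c(n̂+1)⌋) · p_T(⌊c(n̂+1)⌋) · (⌊c(n̂+1)⌋ − ⌊c·n̂⌋). -/
/-!
Write `S n = ∑_{1 ≤ i ≤ n} p_T(i)` and `G x n = ∑_{1 ≤ i ≤ n} max(i - x, 0) p_T(i)` (`excessSum`).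
The atom of `p(· | n̂)` at `n̂` contributes `(1 - c) n̂ (1 - S n̂)`, so
`T_c(n̂) = G (c n̂) n̂ + (1 - c) n̂ (1 - S n̂)` and `ΔT_c(n̂) = G (c(n̂+1)) n̂ - G (c n̂) n̂ + (1 - c)(1 - S n̂)`.
Raising the threshold from `x = c n̂` to `y = x + c` lowers every term with `i > ⌊x⌋` by `c`, except
that the index `i = ⌊y⌋`, when it lies in `(x, y]`, loses only `i - x`; this correction is `α(n̂)`.
-/

/-- The pmf `p(i | n̂)` obtained by truncating the triggering probabilities `p_T` at `n̂`. -/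
noncomputable def pcond (pT : ℕ → ℝ) (nh i : ℕ) : ℝ :=
  if 0 < i ∧ i < nh then pT i
  else if i = nh then 1 - ∑ j ∈ Finset.Ico 1 nh, pT j
  else 0

/-- `T_c(n̂) = E[max(n − c·n̂, 0)]` when `n` has pmf `p(· | n̂)`. -/
noncomputable def Tc (c : ℝ) (pT : ℕ → ℝ) (nh : ℕ) : ℝ :=
  ∑ i ∈ Finset.Icc 1 nh, max ((i : ℝ) - c * nh) 0 * pcond pT nh i

open Finset

noncomputable def excessSum (pT : ℕ → ℝ) (x : ℝ) (n : ℕ) : ℝ :=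
  ∑ i ∈ Icc 1 n, max ((i : ℝ) - x) 0 * pT i

lemma pcond_eq_add_ite (pT : ℕ → ℝ) {n i : ℕ} (hi : i ∈ Icc 1 n) :
    pcond pT n i = pT i + if i = n then 1 - ∑ j ∈ Icc 1 n, pT j else 0 := by
  obtain ⟨hi1, hin⟩ := mem_Icc.mp hi
  rcases hin.lt_or_eq with hlt | rfl
  · simp [pcond, (by omega : 0 < i), hlt, hlt.ne]
  · rw [← Ico_add_one_right_eq_Icc, sum_Ico_succ_top hi1]
    simp only [pcond, lt_irrefl, and_false, if_false, if_true]
    ring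

lemma Tc_eq_excessSum (c : ℝ) (pT : ℕ → ℝ) (n : ℕ) :
    Tc c pT n = excessSum pT (c * n) n + max ((n : ℝ) - c * n) 0 * (1 - ∑ i ∈ Icc 1 n, pT i) := by
  rcases n.eq_zero_or_pos with rfl | hn
  · simp [Tc, excessSum]
  rw [Tc, excessSum, sum_congr rfl fun i hi => by rw [pcond_eq_add_ite pT hi, mul_add, mul_ite,
    mul_zero], sum_add_distrib, sum_ite_eq', if_pos (mem_Icc.mpr ⟨hn, le_rfl⟩)]

lemma excessSum_succ (pT : ℕ → ℝ) {x : ℝ} {n : ℕ} (hx : x ≤ n + 1) :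
    excessSum pT x (n + 1) = excessSum pT x n + ((n + 1 : ℝ) - x) * pT (n + 1) := by
  rw [excessSum, sum_Icc_succ_top (by omega), max_eq_left (by push_cast; linarith)]
  push_cast
  rfl

lemma sum_Icc_one_add_sum_Ioc {M : Type*} [AddCommMonoid M] (f : ℕ → M) {m n : ℕ} (h : m ≤ n) :
    ∑ i ∈ Icc 1 m, f i + ∑ i ∈ Ioc m n, f i = ∑ i ∈ Icc 1 n, f i := by
  rw [← zero_add 1, Icc_add_one_left_eq_Ioc, Icc_add_one_left_eq_Ioc]
  exact sum_Ioc_consecutive f (Nat.zero_le m) h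

lemma excessSum_eq_sum_Ioc (pT : ℕ → ℝ) {x : ℝ} {n : ℕ} (hx : 0 ≤ x) (hn : ⌊x⌋₊ ≤ n) :
    excessSum pT x n = ∑ i ∈ Ioc ⌊x⌋₊ n, ((i : ℝ) - x) * pT i := by
  rw [excessSum, ← sum_Icc_one_add_sum_Ioc _ hn, sum_eq_zero fun i hi => ?_, zero_add]
  · refine sum_congr rfl fun i hi => ?_
    rw [max_eq_left (sub_nonneg.mpr ((Nat.floor_lt hx).mp (mem_Ioc.mp hi).1).le)]
  · rw [max_eq_right (sub_nonpos.mpr ((Nat.le_floor_iff hx).mp (mem_Icc.mp hi).2)), zero_mul]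

lemma sum_Ioc_floor_floor (f : ℕ → ℝ) {x y : ℝ} (hx : 0 ≤ x) (hxy : x ≤ y) (hyx : y ≤ x + 1) :
    ∑ i ∈ Ioc ⌊x⌋₊ ⌊y⌋₊, (y - i) * f i = (y - ⌊y⌋₊) * f ⌊y⌋₊ * (⌊y⌋₊ - ⌊x⌋₊) := by
  have hle : ⌊x⌋₊ ≤ ⌊y⌋₊ := Nat.floor_le_floor hxy
  have hle_succ : ⌊y⌋₊ ≤ ⌊x⌋₊ + 1 := (Nat.floor_le_floor hyx).trans (Nat.floor_add_one hx).le
  rcases (by omega : ⌊y⌋₊ = ⌊x⌋₊ ∨ ⌊y⌋₊ = ⌊x⌋₊ + 1) with h | h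
  · simp [h]
  · rw [h, sum_Ioc_succ_top le_rfl, Ioc_self, sum_empty]
    push_cast
    ring

lemma excessSum_sub_excessSum (pT : ℕ → ℝ) {x y : ℝ} {n : ℕ} (hx : 0 ≤ x) (hxy : x ≤ y)
    (hyx : y ≤ x + 1) (hn : ⌊y⌋₊ ≤ n) :
    excessSum pT y n - excessSum pT x n =
      (y - ⌊y⌋₊) * pT ⌊y⌋₊ * (⌊y⌋₊ - ⌊x⌋₊) - (y - x) * ∑ i ∈ Ioc ⌊x⌋₊ n, pT i := by
  have hle : ⌊x⌋₊ ≤ ⌊y⌋₊ := Nat.floor_le_floor hxy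
  have shift : ∀ s : Finset ℕ, ∑ i ∈ s, ((i : ℝ) - y) * pT i =
      ∑ i ∈ s, ((i : ℝ) - x) * pT i - (y - x) * ∑ i ∈ s, pT i := fun s => by
    rw [mul_sum, ← sum_sub_distrib]
    exact sum_congr rfl fun i _ => by ring
  have neg : ∑ i ∈ Ioc ⌊x⌋₊ ⌊y⌋₊, (y - i) * pT i = -∑ i ∈ Ioc ⌊x⌋₊ ⌊y⌋₊, ((i : ℝ) - y) * pT i := by
    rw [← sum_neg_distrib]
    exact sum_congr rfl fun i _ => by ring
  rw [excessSum_eq_sum_Ioc pT (hx.trans hxy) hn, excessSum_eq_sum_Ioc pT hx (hle.trans hn),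
    ← sum_Ioc_floor_floor pT hx hxy hyx, ← sum_Ioc_consecutive _ hle hn,
    ← sum_Ioc_consecutive pT hle hn]
  linear_combination shift (Ioc ⌊y⌋₊ n) - neg + shift (Ioc ⌊x⌋₊ ⌊y⌋₊)

lemma Tc_succ_sub_Tc (pT : ℕ → ℝ) {c : ℝ} (hc : c ≤ 1) (n : ℕ) :
    Tc c pT (n + 1) - Tc c pT n =
      excessSum pT (c * (n + 1)) n - excessSum pT (c * n) n + (1 - c) * (1 - ∑ i ∈ Icc 1 n, pT i) := by
  have hn : (0 : ℝ) ≤ n := n.cast_nonneg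
  rw [Tc_eq_excessSum, Tc_eq_excessSum, Nat.cast_succ, excessSum_succ pT (by nlinarith),
    sum_Icc_succ_top (by omega), max_eq_left (by nlinarith), max_eq_left (by nlinarith)]
  ring

theorem forward_difference_Tc_general (c : ℝ) (hc : c ∈ Set.Ioo (0 : ℝ) 1)
    (pT : ℕ → ℝ) :
    ∀ nh : ℕ, 0 < nh →
      Tc c pT (nh + 1) - Tc c pT nh =
        (c * ((nh : ℝ) + 1) - (⌊c * ((nh : ℝ) + 1)⌋₊ : ℝ)) * pT ⌊c * ((nh : ℝ) + 1)⌋₊ *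
            ((⌊c * ((nh : ℝ) + 1)⌋₊ : ℝ) - (⌊c * (nh : ℝ)⌋₊ : ℝ))
          + 1 - ∑ i ∈ Finset.Icc 1 nh, pT i
          - c * (1 - ∑ i ∈ Finset.Icc 1 ⌊c * (nh : ℝ)⌋₊, pT i) := by
  intro n _
  obtain ⟨hc0, hc1⟩ := hc
  have hn : (0 : ℝ) ≤ n := n.cast_nonneg
  have hx : 0 ≤ c * n := by positivity
  have hy_lt : c * (n + 1) < n + 1 := by nlinarith
  have hfloor_y : ⌊c * ((n : ℝ) + 1)⌋₊ ≤ n := by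
    have := (Nat.floor_lt (by positivity : 0 ≤ c * ((n : ℝ) + 1))).mpr (by exact_mod_cast hy_lt)
    omega
  have hfloor_x : ⌊c * (n : ℝ)⌋₊ ≤ n := (Nat.floor_le_floor (by nlinarith)).trans hfloor_y
  have hsum_Ioc : ∑ i ∈ Ioc ⌊c * (n : ℝ)⌋₊ n, pT i =
      ∑ i ∈ Icc 1 n, pT i - ∑ i ∈ Icc 1 ⌊c * (n : ℝ)⌋₊, pT i := by
    rw [eq_sub_iff_add_eq', sum_Icc_one_add_sum_Ioc _ hfloor_x]
  rw [Tc_succ_sub_Tc pT hc1.le, excessSum_sub_excessSum pT hx (by nlinarith) (by nlinarith)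
    hfloor_y, hsum_Ioc]
  ring

/-- The forward difference `ΔT_c(n̂) = T_c(n̂+1) − T_c(n̂)` equals
`α(n̂) + 1 − Σ_{i=1}^{n̂} p_T(i) − c·(1 − Σ_{i=1}^{⌊c·n̂⌋} p_T(i))`. -/
theorem forward_difference_Tc (c : ℝ) (hc : c ∈ Set.Ioo (0 : ℝ) 1)
    (pT : ℕ → ℝ) (hpT0 : pT 0 = 0) (hpos : ∀ i, 0 ≤ pT i) (hsum : HasSum pT 1) :
    ∀ nh : ℕ, 0 < nh →
      Tc c pT (nh + 1) - Tc c pT nh =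
        (c * ((nh : ℝ) + 1) - (⌊c * ((nh : ℝ) + 1)⌋₊ : ℝ)) * pT ⌊c * ((nh : ℝ) + 1)⌋₊ *
            ((⌊c * ((nh : ℝ) + 1)⌋₊ : ℝ) - (⌊c * (nh : ℝ)⌋₊ : ℝ))
          + 1 - ∑ i ∈ Finset.Icc 1 nh, pT i
          - c * (1 - ∑ i ∈ Finset.Icc 1 ⌊c * (nh : ℝ)⌋₊, pT i) :=
  forward_difference_Tc_general c hc pT
end

section
/- For every positive integer n̂, the following identity holds for the first sum appearing in the expansion of T_c(n̂+1): Σ_{i=⌊c(n̂+1)⌋+1}^{n̂+1} i · p(i | n̂+1) = Σ_{i=⌊c·n̂⌋+1}^{n̂} i · p(i | n̂) + 1 − Σ_{i=1}^{n̂} p_T(i) − ⌊c(n̂+1)⌋ · p_T(⌊c(n̂+1)⌋) · (⌊c(n̂+1)⌋ − ⌊c·n̂⌋). -/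
open Finset

theorem pcond_self (pT : ℕ → ℝ) (N : ℕ) :
    pcond pT N N = 1 - ∑ j ∈ Ico 1 N, pT j := by
  simp [pcond]

theorem sum_Icc_mul_pcond {pT : ℕ → ℝ} {a N : ℕ} (ha : 0 < a) (haN : a ≤ N) :
    ∑ i ∈ Icc a N, (i : ℝ) * pcond pT N i =
      ∑ i ∈ Icc a N, (i : ℝ) * pT i + N * (1 - ∑ j ∈ Icc 1 N, pT j) := by
  obtain ⟨N, rfl⟩ : ∃ M, N = M + 1 := ⟨N - 1, by omega⟩
  have hbelow : ∀ i ∈ Icc a N, (i : ℝ) * pcond pT (N + 1) i = i * pT i := by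
    intro i hi
    have : 0 < i ∧ i < N + 1 := by simp only [mem_Icc] at hi; omega
    simp [pcond, this]
  rw [sum_Icc_succ_top haN, sum_Icc_succ_top haN, sum_congr rfl hbelow, pcond_self,
    sum_Icc_succ_top (by omega : 1 ≤ N + 1), Ico_add_one_right_eq_Icc]
  ring

theorem sum_Icc_eq_sum_Icc_add_sub_mul {R : Type*} [Ring R] (f : ℕ → R) {K M n : ℕ}
    (hKM : K ≤ M) (hMK : M ≤ K + 1) (hMn : M ≤ n) :
    ∑ i ∈ Icc (K + 1) n, f i = ∑ i ∈ Icc (M + 1) n, f i + ((M : R) - K) * f M := by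
  obtain rfl | rfl : M = K ∨ M = K + 1 := by omega
  · simp
  · rw [← add_sum_Ioc_eq_sum_Icc hMn, ← Icc_add_one_left_eq_Ioc]
    push_cast
    rw [add_sub_cancel_left, one_mul, add_comm]

theorem floor_mul_le_floor_mul_add_one {c : ℝ} (hc : 0 ≤ c) (x : ℝ) :
    ⌊c * x⌋₊ ≤ ⌊c * (x + 1)⌋₊ :=
  Nat.floor_le_floor (by nlinarith)

theorem floor_mul_add_one_le {c x : ℝ} (hc : c ≤ 1) (hcx : 0 ≤ c * x) :
    ⌊c * (x + 1)⌋₊ ≤ ⌊c * x⌋₊ + 1 := by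
  rw [← Nat.floor_add_one hcx]
  exact Nat.floor_le_floor (by nlinarith)

theorem floor_mul_lt_self {c : ℝ} (hc : c < 1) {m : ℕ} (hm : 0 < m) : ⌊c * m⌋₊ < m :=
  (Nat.floor_lt' hm.ne').mpr (by nlinarith [(Nat.cast_pos.mpr hm : (0 : ℝ) < m)])

theorem first_sum_identity_general (c : ℝ) (hc : c ∈ Set.Ioo (0 : ℝ) 1)
    (pT : ℕ → ℝ) :
    ∀ nh : ℕ, 0 < nh →
      ∑ i ∈ Finset.Icc (⌊c * ((nh : ℝ) + 1)⌋₊ + 1) (nh + 1), (i : ℝ) * pcond pT (nh + 1) i =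
        ∑ i ∈ Finset.Icc (⌊c * (nh : ℝ)⌋₊ + 1) nh, (i : ℝ) * pcond pT nh i
          + 1 - ∑ i ∈ Finset.Icc 1 nh, pT i
          - (⌊c * ((nh : ℝ) + 1)⌋₊ : ℝ) * pT ⌊c * ((nh : ℝ) + 1)⌋₊ *
              ((⌊c * ((nh : ℝ) + 1)⌋₊ : ℝ) - (⌊c * (nh : ℝ)⌋₊ : ℝ)) := by
  obtain ⟨hc0, hc1⟩ := hc
  intro nh hnh
  set M := ⌊c * ((nh : ℝ) + 1)⌋₊
  set K := ⌊c * (nh : ℝ)⌋₊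
  have hKM : K ≤ M := floor_mul_le_floor_mul_add_one hc0.le nh
  have hMK : M ≤ K + 1 := floor_mul_add_one_le hc1.le (by positivity)
  have hMn : M ≤ nh := by
    have := floor_mul_lt_self hc1 (Nat.succ_pos nh)
    push_cast at this
    omega
  have hKn : K < nh := floor_mul_lt_self hc1 hnh
  rw [sum_Icc_mul_pcond (by omega) (by omega), sum_Icc_mul_pcond (by omega) hKn,
    sum_Icc_succ_top (by omega : M + 1 ≤ nh + 1), sum_Icc_succ_top (by omega : 1 ≤ nh + 1),
    sum_Icc_eq_sum_Icc_add_sub_mul (fun i ↦ (i : ℝ) * pT i) hKM hMK hMn]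
  push_cast
  ring

/-- The identity for the first sum `Σ_{i>c(n̂+1)}^{n̂+1} i·p(i | n̂+1)` appearing in the
expansion of `T_c(n̂+1)`. -/
theorem first_sum_identity (c : ℝ) (hc : c ∈ Set.Ioo (0 : ℝ) 1)
    (pT : ℕ → ℝ) (hpT0 : pT 0 = 0) (hpos : ∀ i, 0 ≤ pT i) (hsum : HasSum pT 1) :
    ∀ nh : ℕ, 0 < nh →
      ∑ i ∈ Finset.Icc (⌊c * ((nh : ℝ) + 1)⌋₊ + 1) (nh + 1), (i : ℝ) * pcond pT (nh + 1) i =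
        ∑ i ∈ Finset.Icc (⌊c * (nh : ℝ)⌋₊ + 1) nh, (i : ℝ) * pcond pT nh i
          + 1 - ∑ i ∈ Finset.Icc 1 nh, pT i
          - (⌊c * ((nh : ℝ) + 1)⌋₊ : ℝ) * pT ⌊c * ((nh : ℝ) + 1)⌋₊ *
              ((⌊c * ((nh : ℝ) + 1)⌋₊ : ℝ) - (⌊c * (nh : ℝ)⌋₊ : ℝ)) :=
  first_sum_identity_general c hc pT
end

section
/- For every positive integer n̂, the forward difference of T_c is bounded below by ΔT_c(n̂) ≥ 1 − Σ_{i=1}^{n̂} p_T(i) − c. In particular, if Σ_{i=1}^{n̂} p_T(i) ≤ 1 − c then T_c(n̂+1) ≥ T_c(n̂). -/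
/-!
Passing from `n̂` to `n̂ + 1` lowers every threshold `i - c n̂` by `c`, and splits the atom
`1 - Σ_{j<n̂} p_T(j)` at `n̂` into `p_T(n̂)` at `n̂` and `1 - Σ_{j≤n̂} p_T(j)` at `n̂ + 1`.
Since `max (x - c) 0 ≥ max x 0 - c` and the masses sum to `1`, the threshold shift costs
at most `c`, while the mass `1 - Σ_{j≤n̂} p_T(j)` moved one step to the right gains exactly
its own size (above the threshold `max (x - c) 0` is linear in `x`).
-/

open Finset

lemma max_zero_sub_le {c : ℝ} (hc : 0 ≤ c) (x : ℝ) : max x 0 - c ≤ max (x - c) 0 := by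
  rw [← max_sub_sub_right]
  exact max_le_max le_rfl (by linarith)

lemma sum_max_zero_mul_sub_le {ι : Type*} (s : Finset ι) (f p : ι → ℝ) {c : ℝ} (hc : 0 ≤ c)
    (hp : ∀ i ∈ s, 0 ≤ p i) :
    ∑ i ∈ s, max (f i) 0 * p i - c * ∑ i ∈ s, p i ≤ ∑ i ∈ s, max (f i - c) 0 * p i := by
  rw [mul_sum, ← sum_sub_distrib]
  refine sum_le_sum fun i hi => ?_
  rw [← sub_mul]
  exact mul_le_mul_of_nonneg_right (max_zero_sub_le hc _) (hp i hi)

lemma Tc_eq_of_le_one {c : ℝ} (hc : c ≤ 1) (pT : ℕ → ℝ) {nh : ℕ} (hn : 0 < nh) :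
    Tc c pT nh = ∑ i ∈ Ico 1 nh, max ((i : ℝ) - c * nh) 0 * pT i
      + ((nh : ℝ) - c * nh) * (1 - ∑ j ∈ Ico 1 nh, pT j) := by
  have hnh : 0 ≤ (nh : ℝ) - c * nh := by nlinarith [Nat.cast_nonneg (α := ℝ) nh]
  rw [Tc, ← Ico_add_one_right_eq_Icc, sum_Ico_succ_top hn, pcond, max_eq_left hnh]
  congr 1
  · refine sum_congr rfl fun i hi => ?_
    rw [pcond, if_pos (show 0 < i ∧ i < nh from mem_Ico.mp hi)]
  · simp

lemma Tc_add_le_Tc_succ {c : ℝ} (hc0 : 0 ≤ c) (hc1 : c ≤ 1) {pT : ℕ → ℝ} (hpos : ∀ i, 0 ≤ pT i)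
    {nh : ℕ} (hn : 0 < nh) :
    Tc c pT nh + (1 - ∑ i ∈ Icc 1 nh, pT i - c) ≤ Tc c pT (nh + 1) := by
  have hA := sum_max_zero_mul_sub_le (Ico 1 nh) (fun i => (i : ℝ) - c * nh) pT hc0
    fun i _ => hpos i
  have hM : ((nh : ℝ) - c * nh - c) * pT nh ≤ max ((nh : ℝ) - c * (nh + 1)) 0 * pT nh :=
    mul_le_mul_of_nonneg_right (by rw [mul_add_one, ← sub_sub]; exact le_max_left _ _) (hpos nh)
  rw [Tc_eq_of_le_one hc1 pT hn, Tc_eq_of_le_one hc1 pT nh.succ_pos, ← Ico_add_one_right_eq_Icc,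
    sum_Ico_succ_top hn, sum_Ico_succ_top hn]
  push_cast
  simp only [sub_sub, ← mul_add_one] at hA
  linear_combination hA + hM

theorem forward_difference_Tc_lower_bound_general (c : ℝ) (hc : c ∈ Set.Ioo (0 : ℝ) 1)
    (pT : ℕ → ℝ) (hpos : ∀ i, 0 ≤ pT i) :
    ∀ nh : ℕ, 0 < nh →
      (1 - ∑ i ∈ Finset.Icc 1 nh, pT i - c ≤ Tc c pT (nh + 1) - Tc c pT nh) ∧
      ((∑ i ∈ Finset.Icc 1 nh, pT i ≤ 1 - c) → Tc c pT nh ≤ Tc c pT (nh + 1)) := by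
  intro nh hn
  have key := Tc_add_le_Tc_succ hc.1.le hc.2.le hpos hn
  exact ⟨by linarith, fun h => by linarith⟩

/-- Lower bound on the forward difference: `ΔT_c(n̂) ≥ 1 − Σ_{i=1}^{n̂} p_T(i) − c`.
In particular, if `Σ_{i=1}^{n̂} p_T(i) ≤ 1 − c` then `T_c(n̂+1) ≥ T_c(n̂)`. -/
theorem forward_difference_Tc_lower_bound (c : ℝ) (hc : c ∈ Set.Ioo (0 : ℝ) 1)
    (pT : ℕ → ℝ) (hpT0 : pT 0 = 0) (hpos : ∀ i, 0 ≤ pT i) (hsum : HasSum pT 1) :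
    ∀ nh : ℕ, 0 < nh →
      (1 - ∑ i ∈ Finset.Icc 1 nh, pT i - c ≤ Tc c pT (nh + 1) - Tc c pT nh) ∧
      ((∑ i ∈ Finset.Icc 1 nh, pT i ≤ 1 - c) → Tc c pT nh ≤ Tc c pT (nh + 1)) :=
  forward_difference_Tc_lower_bound_general c hc pT hpos
end

section
/- If the function n̂ ↦ T_c(n̂) attains its supremum over the positive integers at some positive integer, then it attains its supremum at some positive integer n̂* satisfying Σ_{i=1}^{n̂*} p_T(i) > 1 − c. Equivalently, T_c is nondecreasing on {n̂ : Σ_{i=1}^{n̂} p_T(i) ≤ 1 − c}, and every global maximizer of T_c (or one achieving the same value) lies at or beyond (n^S)* = inf{ n ∈ ℤ₊ : Σ_{i=1}^{n} p_T(i) > 1 − c }, which is finite since Σ_{i=1}^∞ p_T(i) = 1 > 1 − c. -/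
open Finset Filter Topology

theorem tendsto_sum_Icc_one_of_hasSum {f : ℕ → ℝ} {s : ℝ} (hf0 : f 0 = 0) (hf : HasSum f s) :
    Tendsto (fun n ↦ ∑ i ∈ Icc 1 n, f i) atTop (𝓝 s) := by
  have hsum (n : ℕ) : ∑ i ∈ Icc 1 n, f i = ∑ i ∈ range (n + 1), f i := by
    rw [sum_range_eq_add_Ico f (by omega : 0 < n + 1), Ico_add_one_right_eq_Icc, hf0, zero_add]
  simp only [hsum]
  exact hf.tendsto_sum_nat.comp (tendsto_add_atTop_nat 1)

theorem Tc_eq_of_pos {c : ℝ} (hc : c ≤ 1) (pT : ℕ → ℝ) {n : ℕ} (hn : 0 < n) :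
    Tc c pT n = ∑ i ∈ Ico 1 n, max ((i : ℝ) - c * n) 0 * pT i
      + ((n : ℝ) - c * n) * (1 - ∑ j ∈ Ico 1 n, pT j) := by
  rw [Tc, ← Ico_add_one_right_eq_Icc, sum_Ico_succ_top hn]
  congr 1
  · refine sum_congr rfl fun i hi ↦ ?_
    obtain ⟨hi1, hin⟩ := mem_Ico.1 hi
    rw [pcond, if_pos ⟨hi1, hin⟩]
  · have hmax : max ((n : ℝ) - c * n) 0 = n - c * n :=
      max_eq_left (by nlinarith [(n.cast_nonneg : (0 : ℝ) ≤ n)])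
    rw [pcond, if_neg (by omega), if_pos rfl, hmax]

theorem Tc_le_Tc_succ {c : ℝ} (hc0 : 0 ≤ c) (hc1 : c ≤ 1) {pT : ℕ → ℝ} (hpos : ∀ i, 0 ≤ pT i)
    {n : ℕ} (hn : 0 < n) (hS : ∑ i ∈ Icc 1 n, pT i ≤ 1 - c) :
    Tc c pT n ≤ Tc c pT (n + 1) := by
  rw [Tc_eq_of_pos hc1 pT hn, Tc_eq_of_pos hc1 pT n.succ_pos, sum_Ico_succ_top hn,
    sum_Ico_succ_top hn (f := pT)]
  rw [← Ico_add_one_right_eq_Icc, sum_Ico_succ_top hn] at hS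
  push_cast
  set Q := ∑ j ∈ Ico 1 n, pT j
  have hdrop : (∑ i ∈ Ico 1 n, max ((i : ℝ) - c * n) 0 * pT i) - c * Q
      ≤ ∑ i ∈ Ico 1 n, max ((i : ℝ) - c * (n + 1)) 0 * pT i := by
    rw [mul_sum, ← sum_sub_distrib]
    refine sum_le_sum fun i _ ↦ ?_
    have h : max ((i : ℝ) - c * n) 0 - c ≤ max ((i : ℝ) - c * (n + 1)) 0 := by
      rw [← max_sub_sub_right, mul_add_one, ← sub_sub]
      exact max_le_max le_rfl (by linarith)
    rw [← sub_mul]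
    exact mul_le_mul_of_nonneg_right h (hpos i)
  have htop : ((n : ℝ) - c * (n + 1)) * pT n ≤ max ((n : ℝ) - c * (n + 1)) 0 * pT n :=
    mul_le_mul_of_nonneg_right (le_max_left _ _) (hpos n)
  linear_combination hdrop + htop + hS

theorem Tc_le_Tc_of_sum_le {c : ℝ} (hc0 : 0 ≤ c) (hc1 : c ≤ 1) {pT : ℕ → ℝ}
    (hpos : ∀ i, 0 ≤ pT i) {m n : ℕ} (hm : 0 < m) (hmn : m ≤ n)
    (hS : ∀ k, m ≤ k → k < n → ∑ i ∈ Icc 1 k, pT i ≤ 1 - c) :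
    Tc c pT m ≤ Tc c pT n := by
  induction n, hmn using Nat.le_induction with
  | base => exact le_rfl
  | succ k hmk ih =>
    exact (ih fun j hmj hjk ↦ hS j hmj (by omega)).trans
      (Tc_le_Tc_succ hc0 hc1 hpos (by omega) (hS k hmk k.lt_succ_self))

/-- If `T_c` attains its supremum over the positive integers at some positive integer, then it
attains it at some `n̂*` with triggering-probability quantile `Σ_{i=1}^{n̂*} p_T(i) > 1 − c`. -/
theorem global_maximizer_quantile (c : ℝ) (hc : c ∈ Set.Ioo (0 : ℝ) 1)
    (pT : ℕ → ℝ) (hpT0 : pT 0 = 0) (hpos : ∀ i, 0 ≤ pT i) (hsum : HasSum pT 1) :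
    (∃ nmax : ℕ, 0 < nmax ∧ ∀ n : ℕ, 0 < n → Tc c pT n ≤ Tc c pT nmax) →
      ∃ nstar : ℕ, 0 < nstar ∧ (∀ n : ℕ, 0 < n → Tc c pT n ≤ Tc c pT nstar) ∧
        1 - c < ∑ i ∈ Finset.Icc 1 nstar, pT i := by
  rintro ⟨nmax, hnmax, hmax⟩
  obtain ⟨hc0, hc1⟩ := hc
  have hex : ∃ n, 1 - c < ∑ i ∈ Icc 1 n, pT i :=
    ((tendsto_sum_Icc_one_of_hasSum hpT0 hsum).eventually (lt_mem_nhds (by linarith))).exists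
  classical
  have hquant := Nat.find_spec hex
  have hquant_pos : 0 < Nat.find hex := Nat.pos_of_ne_zero fun h ↦ by
    rw [h, Icc_eq_empty_of_lt zero_lt_one, sum_empty] at hquant
    linarith
  rcases le_or_gt (Nat.find hex) nmax with hle | hlt
  · exact ⟨nmax, hnmax, hmax, hquant.trans_le
      (sum_le_sum_of_subset_of_nonneg (Icc_subset_Icc_right hle) fun i _ _ ↦ hpos i)⟩
  · have hT : Tc c pT nmax ≤ Tc c pT (Nat.find hex) :=
      Tc_le_Tc_of_sum_le hc0.le hc1.le hpos hnmax hlt.le fun k _ hk ↦ not_lt.1 (Nat.find_min hex hk)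
    exact ⟨_, hquant_pos, fun n hn ↦ (hmax n hn).trans hT, hquant⟩
end
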